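/- Under the hypotheses on (v₁,…,v_d; λ₁,…,λ_d; c; a) stated in the context, fix k ∈ {1,…,n} and fix t₁,…,t_{k−1},t_{k+1},…,tₙ ∈ ℝ, and set b_u = c_u·e^{2·Σ_{m∈{1,…,n}, m≠k} l_m(u)t_m} for u ∈ S. Then, as tₖ → −∞, the function e^{−2tₖ}·vₖᵀ(Hess g₀)(ξ(t))vₖ converges to the value 2(Σᵢ₌₁^d aᵢ)·(Σ_{u∈S, lₖ(u)=1} b_u)/(Σ_{u∈S, lₖ(u)=0} b_u) − 2·Σ_{i∈{1,…,d}, i≠k} aᵢ·(Σ_{u∈S, lₖ(u)=1, lᵢ(u)≥1} lᵢ(u)b_u)/(Σ_{u∈S, lₖ(u)=0, lᵢ(u)≥1} lᵢ(u)b_u) − 4aₖ·(Σ_{u∈S, lₖ(u)=2} b_u)/(Σ_{u∈S, lₖ(u)=1} b_u). -/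

import Mathlib

/-!
As a function of `r`, `Σ_u β_u e^{2⟨u, x + r w⟩}` is the moment generating function of `2⟨u,w⟩`
under the weights `β_u e^{2⟨u,x⟩}`, so the second derivative of its logarithm at `r = 0` is the
variance of `2⟨u,w⟩` under these weights. For `x = ξ(t)` and `w = v_k` one has
`⟨u, v_k⟩ = l_k(u) - λ_k`, and up to a common factor the weights are `b_u e^{2 l_k(u) t_k}` with
`b_u = β_u e^{2 Σ_{m ≠ k} l_m(u) t_m}`. As `t_k → -∞` the variance of the integer `l_k`
is carried by its two lowest levels `j` and `j + 1` of nonzero weight, which gives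
`e^{2 t_k} (Σ_{l_k = j+1} b) / (Σ_{l_k = j} b)`. The lowest level is `j = 0` for `β = c` and for
`β = c · l_i` with `i ≠ k`, and `j = 1` for `β = c · l_k`.
-/

open Filter

noncomputable section

/-- First directional derivative of `g` at `x` in direction `w`. -/
def pd1 {n : ℕ} (g : (Fin n → ℝ) → ℝ) (x w : Fin n → ℝ) : ℝ :=
  fderiv ℝ g x w

/-- Second derivative (Hessian bilinear form) of `g` at `x` applied to `w₁, w₂`. -/
def pd2 {n : ℕ} (g : (Fin n → ℝ) → ℝ) (x w₁ w₂ : Fin n → ℝ) : ℝ :=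
  fderiv ℝ (fun y => fderiv ℝ g y w₁) x w₂

/-- `ξ(t) = t₁ v₁ + ⋯ + tₙ vₙ`. -/
def xi {n : ℕ} (v : Fin n → (Fin n → ℝ)) (t : Fin n → ℝ) : Fin n → ℝ :=
  ∑ m, t m • v m

/-- The growth condition (∗) with data `(v₁,…,vₙ; a₁,…,aₙ)`. -/
def GrowthCondition {n : ℕ} (v : Fin n → (Fin n → ℝ)) (a : Fin n → ℝ)
    (g : (Fin n → ℝ) → ℝ) : Prop :=
  (∀ j : Fin n, ∀ t : Fin n → ℝ, ∃ L : ℝ,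
    Tendsto (fun s : ℝ =>
        2 * Real.exp (-2 * s) * (pd1 g (xi v (Function.update t j s)) (v j) + a j))
      atBot (nhds L) ∧
    Tendsto (fun s : ℝ =>
        Real.exp (-2 * s) * pd2 g (xi v (Function.update t j s)) (v j) (v j))
      atBot (nhds L)) ∧
  (∀ j k l : Fin n, ∀ t : Fin n → ℝ, ∃ L : ℝ,
    Tendsto (fun s : ℝ => pd2 g (xi v (Function.update t l s)) (v j) (v k))
      atBot (nhds L)) ∧
  (∀ j k : Fin n, j ≠ k → ∀ t : Fin n → ℝ,
    Tendsto (fun s : ℝ =>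
        Real.exp (-s - t k) * pd2 g (xi v (Function.update t j s)) (v j) (v k))
      atBot (nhds 0) ∧
    Tendsto (fun s : ℝ =>
        Real.exp (-(t j) - s) * pd2 g (xi v (Function.update t k s)) (v j) (v k))
      atBot (nhds 0))

/-- The affine-linear function `lᵢ(u) = ⟨u,vᵢ⟩ + λᵢ` (integer version). -/
def lfun {n d : ℕ} (v : Fin d → Fin n → ℤ) (lam : Fin d → ℤ) (i : Fin d)
    (u : Fin n → ℤ) : ℤ :=
  (∑ j, u j * v i j) + lam i

/-- The affine-linear function `lᵢ(x) = ⟨x,vᵢ⟩ + λᵢ` (real version). -/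
def lfunR {n d : ℕ} (v : Fin d → Fin n → ℤ) (lam : Fin d → ℤ) (i : Fin d)
    (x : Fin n → ℝ) : ℝ :=
  (∑ j, x j * (v i j : ℝ)) + (lam i : ℝ)

/-- Guillemin's potential
`g₀(ξ) = -(1/2) Σᵢ aᵢ log( (Σ_{u∈S} c_u lᵢ(u) e^{2⟨u,ξ⟩}) / (Σ_{u∈S} c_u e^{2⟨u,ξ⟩}) )`. -/
def gzero {n d : ℕ} (v : Fin d → Fin n → ℤ) (lam : Fin d → ℤ)
    (S : Finset (Fin n → ℤ)) (c : (Fin n → ℤ) → ℝ) (a : Fin d → ℤ)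
    (ξ : Fin n → ℝ) : ℝ :=
  -(1/2) * ∑ i : Fin d, (a i : ℝ) *
    Real.log ((∑ u ∈ S, c u * (lfun v lam i u : ℝ) * Real.exp (2 * ∑ m, (u m : ℝ) * ξ m)) /
      (∑ u ∈ S, c u * Real.exp (2 * ∑ m, (u m : ℝ) * ξ m)))


/-- `b_u = c_u e^{2 Σ_{m ≠ k} l_m(u) t_m}` (the coordinates `t_m`, `m ≠ k`, being fixed). -/
def bcoef {n d : ℕ} (v : Fin d → Fin n → ℤ) (lam : Fin d → ℤ) (hnd : n ≤ d)
    (c : (Fin n → ℤ) → ℝ) (k : Fin n) (t : Fin n → ℝ) (u : Fin n → ℤ) : ℝ :=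
  c u * Real.exp (2 * ∑ m ∈ Finset.univ.erase k,
    (lfun v lam (Fin.castLE hnd m) u : ℝ) * t m)

open Real Topology

namespace Finset

variable {ι : Type*} (S : Finset ι)

def weightedMean (p y : ι → ℝ) : ℝ := (∑ u ∈ S, p u * y u) / ∑ u ∈ S, p u

def weightedVar (p y : ι → ℝ) : ℝ :=
  S.weightedMean p (fun u => y u ^ 2) - S.weightedMean p y ^ 2

theorem weightedVar_const_mul {p : ι → ℝ} (y : ι → ℝ) {C : ℝ} (hC : C ≠ 0) :
    S.weightedVar (fun u => C * p u) y = S.weightedVar p y := by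
  simp only [weightedVar, weightedMean, mul_assoc, ← mul_sum, mul_div_mul_left _ _ hC]

theorem weightedVar_affine {p : ι → ℝ} (y : ι → ℝ) (a b : ℝ) (hp : ∑ u ∈ S, p u ≠ 0) :
    S.weightedVar p (fun u => a * y u + b) = a ^ 2 * S.weightedVar p y := by
  have h1 : ∑ u ∈ S, p u * (a * y u + b) =
      a * ∑ u ∈ S, p u * y u + b * ∑ u ∈ S, p u := by
    simp only [mul_sum, ← sum_add_distrib]
    exact sum_congr rfl fun u _ => by ring
  have h2 : ∑ u ∈ S, p u * (a * y u + b) ^ 2 = a ^ 2 * ∑ u ∈ S, p u * y u ^ 2 +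
      2 * a * b * ∑ u ∈ S, p u * y u + b ^ 2 * ∑ u ∈ S, p u := by
    simp only [mul_sum, ← sum_add_distrib]
    exact sum_congr rfl fun u _ => by ring
  simp only [weightedVar, weightedMean, h1, h2]
  field_simp
  ring

theorem hasDerivAt_sum_mul_exp (p y : ι → ℝ) (r : ℝ) :
    HasDerivAt (fun r => ∑ u ∈ S, p u * exp (y u * r))
      (∑ u ∈ S, p u * exp (y u * r) * y u) r := by
  refine HasDerivAt.fun_sum fun u _ => ?_
  simpa [mul_comm, mul_assoc, mul_left_comm] using
    (((hasDerivAt_id r).const_mul (y u)).exp).const_mul (p u)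

theorem hasDerivAt_log_sum_mul_exp (p y : ι → ℝ) (r : ℝ)
    (hr : ∑ u ∈ S, p u * exp (y u * r) ≠ 0) :
    HasDerivAt (fun r => log (∑ u ∈ S, p u * exp (y u * r)))
      (S.weightedMean (fun u => p u * exp (y u * r)) y) r := by
  simpa [weightedMean, div_eq_inv_mul] using (S.hasDerivAt_sum_mul_exp p y r).log hr

theorem hasDerivAt_weightedMean_mul_exp (p y : ι → ℝ) (hp : ∑ u ∈ S, p u ≠ 0) :
    HasDerivAt (fun r => S.weightedMean (fun u => p u * exp (y u * r)) y)
      (S.weightedVar p y) 0 := by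
  have hnum : HasDerivAt (fun r => ∑ u ∈ S, p u * exp (y u * r) * y u)
      (∑ u ∈ S, p u * y u * y u) 0 := by
    simpa [mul_right_comm] using S.hasDerivAt_sum_mul_exp (fun u => p u * y u) y 0
  refine (hnum.fun_div (by simpa using S.hasDerivAt_sum_mul_exp p y 0)
    (by simpa using hp)).congr_deriv ?_
  simp only [weightedVar, weightedMean, mul_zero, exp_zero, mul_one]
  field_simp

theorem tendsto_exp_mul_sum_mul_exp_atBot (ℓ : ι → ℤ) (γ : ι → ℝ) (j : ℤ)
    (hγ : ∀ u ∈ S, ℓ u < j → γ u = 0) :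
    Tendsto (fun s => exp (-(j * s)) * ∑ u ∈ S, γ u * exp (ℓ u * s)) atBot
      (𝓝 (∑ u ∈ S with ℓ u = j, γ u)) := by
  have hshift : ∀ s : ℝ, exp (-(j * s)) * ∑ u ∈ S, γ u * exp (ℓ u * s) =
      ∑ u ∈ S, γ u * exp (((ℓ u - j : ℤ) : ℝ) * s) := fun s => by
    rw [mul_sum]
    refine sum_congr rfl fun u _ => ?_
    rw [mul_left_comm, ← exp_add]
    push_cast
    ring_nf
  simp_rw [hshift, sum_filter]
  refine tendsto_finsetSum _ fun u hu => ?_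
  rcases lt_trichotomy (ℓ u) j with hlt | heq | hgt
  · simp [hγ u hu hlt, hlt.ne]
  · simp [heq]
  · have hpos : (0 : ℝ) < ((ℓ u - j : ℤ) : ℝ) := by exact_mod_cast sub_pos.mpr hgt
    simpa [hgt.ne'] using
      (tendsto_exp_atBot.comp (tendsto_id.const_mul_atBot hpos)).const_mul (γ u)

theorem eventually_sum_mul_exp_ne_zero_atBot (ℓ : ι → ℤ) (q : ι → ℝ) (j : ℤ)
    (hq : ∀ u ∈ S, ℓ u < j → q u = 0) (hD : ∑ u ∈ S with ℓ u = j, q u ≠ 0) :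
    ∀ᶠ s in atBot, ∑ u ∈ S, q u * exp (ℓ u * s) ≠ 0 :=
  ((S.tendsto_exp_mul_sum_mul_exp_atBot ℓ q j hq).eventually_ne hD).mono
    fun _ hs => right_ne_zero_of_mul hs

/-- After centring the values at `j`, the second moment is of order `e^s` and the square of the
first moment of order `e^{2s}`. -/
theorem tendsto_exp_mul_weightedVar_atBot (ℓ : ι → ℤ) (q : ι → ℝ) (j : ℤ)
    (hq : ∀ u ∈ S, ℓ u < j → q u = 0) (hD : ∑ u ∈ S with ℓ u = j, q u ≠ 0) :
    Tendsto (fun s => exp (-s) * S.weightedVar (fun u => q u * exp (ℓ u * s)) (fun u => ℓ u))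
      atBot (𝓝 ((∑ u ∈ S with ℓ u = j + 1, q u) / ∑ u ∈ S with ℓ u = j, q u)) := by
  set y : ι → ℝ := fun u => ℓ u - j
  have hvanish : ∀ m : ℕ, ∀ u ∈ S, ℓ u < j → q u * y u ^ m = 0 := fun m u hu h => by
    rw [hq u hu h, zero_mul]
  have hvanish_succ : ∀ m : ℕ, 0 < m → ∀ u ∈ S, ℓ u < j + 1 → q u * y u ^ m = 0 :=
    fun m hm u hu h => by
      rcases (Int.lt_add_one_iff.mp h).lt_or_eq with hlt | heq
      · rw [hq u hu hlt, zero_mul]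
      · simp [y, heq, hm.ne']
  have hmass := S.tendsto_exp_mul_sum_mul_exp_atBot ℓ q j hq
  have hfirst_high :=
    S.tendsto_exp_mul_sum_mul_exp_atBot ℓ _ (j + 1) (hvanish_succ 1 one_pos)
  have hfirst_low := S.tendsto_exp_mul_sum_mul_exp_atBot ℓ _ j (hvanish 1)
  have hsecond :=
    S.tendsto_exp_mul_sum_mul_exp_atBot ℓ _ (j + 1) (hvanish_succ 2 two_pos)
  have hlow_level : ∑ u ∈ S with ℓ u = j, q u * y u ^ 1 = 0 :=
    sum_eq_zero fun u hu => by simp [y, (mem_filter.mp hu).2]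
  have hnext_level : ∑ u ∈ S with ℓ u = j + 1, q u * y u ^ 2 = ∑ u ∈ S with ℓ u = j + 1, q u :=
    sum_congr rfl fun u hu => by simp [y, (mem_filter.mp hu).2]
  rw [hlow_level] at hfirst_low
  rw [hnext_level] at hsecond
  have hlim := (hsecond.div hmass hD).sub
    ((hfirst_high.mul hfirst_low).div (hmass.pow 2) (pow_ne_zero 2 hD))
  rw [mul_zero, zero_div, sub_zero] at hlim
  refine hlim.congr' ?_
  filter_upwards [S.eventually_sum_mul_exp_ne_zero_atBot ℓ q j hq hD] with s hs
  have hE : exp (-((j + 1 : ℤ) * s)) = exp (-s) * exp (-(j * s)) := by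
    rw [← exp_add]; push_cast; ring_nf
  have hmoment : ∀ m : ℕ, ∑ u ∈ S, q u * y u ^ m * exp (ℓ u * s) =
      ∑ u ∈ S, q u * exp (ℓ u * s) * y u ^ m := fun m => sum_congr rfl fun u _ => by ring
  have hV : S.weightedVar (fun u => q u * exp (ℓ u * s)) (fun u => ℓ u) =
      S.weightedVar (fun u => q u * exp (ℓ u * s)) y := by
    simpa [y, sub_eq_add_neg] using (S.weightedVar_affine (fun u => (ℓ u : ℝ)) 1 (-j) hs).symm
  rw [hV]
  simp only [weightedVar, weightedMean, Pi.div_apply, hE, hmoment]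
  field_simp

end Finset

theorem pd2_eq_deriv_deriv {n : ℕ} {g : (Fin n → ℝ) → ℝ} (hg : ContDiff ℝ 2 g)
    (x w : Fin n → ℝ) :
    pd2 g x w w = deriv (deriv fun r : ℝ => g (x + r • w)) 0 := by
  have hline : ∀ r : ℝ, HasDerivAt (fun r : ℝ => x + r • w) w r := fun r => by
    simpa using ((hasDerivAt_id r).smul_const w).const_add x
  have hD : deriv (fun r : ℝ => g (x + r • w)) = fun r => fderiv ℝ g (x + r • w) w := by
    funext r
    exact (((hg.differentiable (by norm_num)) _).hasFDerivAt.comp_hasDerivAt r (hline r)).deriv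
  have hD2 : Differentiable ℝ (fun y => fderiv ℝ g y w) := by
    have := (hg.fderiv_right (m := 1) (by norm_num)).differentiable (by norm_num)
    fun_prop
  have hcomp := (hD2 (x + (0:ℝ) • w)).hasFDerivAt.comp_hasDerivAt 0 (hline 0)
  rw [zero_smul, add_zero] at hcomp
  rw [hD, pd2]
  exact hcomp.deriv.symm

section ExpSum

variable {n : ℕ} (S : Finset (Fin n → ℤ))

def pairing (u : Fin n → ℤ) (x : Fin n → ℝ) : ℝ := ∑ m, (u m : ℝ) * x m

def expSum (β : (Fin n → ℤ) → ℝ) (x : Fin n → ℝ) : ℝ :=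
  ∑ u ∈ S, β u * exp (2 * pairing u x)

/-- The second derivative of `log (expSum S β)` at `x` in direction `w`
(see `pd2_neg_half_sum_log_div`). -/
def hessLogExpSum (β : (Fin n → ℤ) → ℝ) (x w : Fin n → ℝ) : ℝ :=
  S.weightedVar (fun u => β u * exp (2 * pairing u x)) (fun u => 2 * pairing u w)

theorem expSum_pos {β : (Fin n → ℤ) → ℝ} (hβ : ∀ u ∈ S, 0 ≤ β u)
    (hpos : ∃ u ∈ S, 0 < β u) (x : Fin n → ℝ) : 0 < expSum S β x := by
  obtain ⟨u₀, hu₀, hβu₀⟩ := hpos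
  exact Finset.sum_pos' (fun u hu => mul_nonneg (hβ u hu) (exp_pos _).le)
    ⟨u₀, hu₀, mul_pos hβu₀ (exp_pos _)⟩

theorem contDiff_expSum (β : (Fin n → ℤ) → ℝ) : ContDiff ℝ 2 (expSum S β) := by
  unfold expSum pairing
  fun_prop

theorem pairing_add_smul (u : Fin n → ℤ) (x w : Fin n → ℝ) (r : ℝ) :
    pairing u (x + r • w) = pairing u x + pairing u w * r := by
  simp only [pairing, Pi.add_apply, Pi.smul_apply, smul_eq_mul, mul_add, Finset.sum_add_distrib,
    Finset.sum_mul]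
  exact congrArg _ (Finset.sum_congr rfl fun m _ => by ring)

theorem expSum_add_smul (β : (Fin n → ℤ) → ℝ) (x w : Fin n → ℝ) (r : ℝ) :
    expSum S β (x + r • w) =
      ∑ u ∈ S, β u * exp (2 * pairing u x) * exp (2 * pairing u w * r) := by
  refine Finset.sum_congr rfl fun u _ => ?_
  rw [mul_assoc, ← exp_add, pairing_add_smul]
  ring_nf

theorem pd2_neg_half_sum_log_div {ι : Type*} [Fintype ι] (a : ι → ℝ)
    (β : ι → (Fin n → ℤ) → ℝ) (γ : (Fin n → ℤ) → ℝ) (hβ : ∀ i x, 0 < expSum S (β i) x)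
    (hγ : ∀ x, 0 < expSum S γ x) (x w : Fin n → ℝ) :
    pd2 (fun y => -(1/2) * ∑ i, a i * log (expSum S (β i) y / expSum S γ y)) x w w =
      -(1/2) * ∑ i, a i * (hessLogExpSum S (β i) x w - hessLogExpSum S γ x w) := by
  have hsmooth : ContDiff ℝ 2
      (fun y => -(1/2) * ∑ i, a i * log (expSum S (β i) y / expSum S γ y)) := by
    have := contDiff_expSum S γ
    have := fun i => contDiff_expSum S (β i)
    fun_prop (disch := simp [(hβ _ _).ne', (hγ _).ne'])
  set M : ((Fin n → ℤ) → ℝ) → ℝ → ℝ := fun β r =>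
    S.weightedMean (fun u => β u * exp (2 * pairing u x) * exp (2 * pairing u w * r))
      (fun u => 2 * pairing u w)
  have hlog : ∀ β : (Fin n → ℤ) → ℝ, (∀ x, 0 < expSum S β x) → ∀ r,
      HasDerivAt (fun r => log (expSum S β (x + r • w))) (M β r) r := fun β hβ r => by
    simp only [expSum_add_smul]
    exact S.hasDerivAt_log_sum_mul_exp _ _ r
      (by simpa [expSum_add_smul] using (hβ (x + r • w)).ne')
  have hmean : ∀ β : (Fin n → ℤ) → ℝ, (∀ x, 0 < expSum S β x) →
      HasDerivAt (M β) (hessLogExpSum S β x w) 0 :=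
    fun β hβ => S.hasDerivAt_weightedMean_mul_exp _ _ (hβ x).ne'
  have hfirst : deriv (fun r => -(1/2) * ∑ i, a i *
      log (expSum S (β i) (x + r • w) / expSum S γ (x + r • w))) =
      fun r => -(1/2) * ∑ i, a i * (M (β i) r - M γ r) := by
    funext r
    refine HasDerivAt.deriv (HasDerivAt.const_mul _ (HasDerivAt.fun_sum fun i _ => ?_))
    refine (((hlog _ (hβ i) r).sub (hlog _ hγ r)).const_mul (a i)).congr_of_eventuallyEq ?_
    exact .of_forall fun r => by simp [log_div (hβ i _).ne' (hγ _).ne']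
  rw [pd2_eq_deriv_deriv hsmooth, hfirst]
  exact (HasDerivAt.const_mul _ (HasDerivAt.fun_sum fun i _ =>
    ((hmean _ (hβ i)).sub (hmean _ hγ)).const_mul (a i))).deriv

end ExpSum

section Curve

variable {n d : ℕ} (hnd : n ≤ d) (v : Fin d → Fin n → ℤ) (lam : Fin d → ℤ)
  (S : Finset (Fin n → ℤ)) (k : Fin n) (t : Fin n → ℝ)

theorem pairing_row (u : Fin n → ℤ) (i : Fin d) :
    pairing u (fun p => (v i p : ℝ)) = lfun v lam i u - lam i := by
  simp [pairing, lfun, mul_comm]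

theorem pairing_xi (u : Fin n → ℤ) (t' : Fin n → ℝ) :
    pairing u (xi (fun j p => (v (Fin.castLE hnd j) p : ℝ)) t') =
      ∑ m, t' m * ((lfun v lam (Fin.castLE hnd m) u : ℝ) - lam (Fin.castLE hnd m)) := by
  simp only [← pairing_row v lam, pairing, xi, Finset.sum_apply, Pi.smul_apply, smul_eq_mul,
    Finset.mul_sum]
  rw [Finset.sum_comm]
  exact Finset.sum_congr rfl fun m _ => Finset.sum_congr rfl fun p _ => by ring

theorem mul_exp_pairing_xi_update (β : (Fin n → ℤ) → ℝ) (u : Fin n → ℤ) (s : ℝ) :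
    β u * exp (2 * pairing u
        (xi (fun j p => (v (Fin.castLE hnd j) p : ℝ)) (Function.update t k s))) =
      exp (-2 * ∑ m, Function.update t k s m * lam (Fin.castLE hnd m)) *
        (bcoef v lam hnd β k t u * exp (lfun v lam (Fin.castLE hnd k) u * (2 * s))) := by
  have hsplit : ∑ m, Function.update t k s m * (lfun v lam (Fin.castLE hnd m) u : ℝ) =
      s * lfun v lam (Fin.castLE hnd k) u +
        ∑ m ∈ Finset.univ.erase k, (lfun v lam (Fin.castLE hnd m) u : ℝ) * t m := by
    rw [← Finset.add_sum_erase _ _ (Finset.mem_univ k), Function.update_self]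
    congr 1
    refine Finset.sum_congr rfl fun m hm => ?_
    rw [Function.update_of_ne (Finset.ne_of_mem_erase hm), mul_comm]
  rw [pairing_xi hnd v lam, bcoef, mul_assoc, ← exp_add, mul_left_comm, ← exp_add]
  simp only [mul_sub, Finset.sum_sub_distrib, hsplit]
  ring_nf

theorem hessLogExpSum_xi_update (β : (Fin n → ℤ) → ℝ) (s : ℝ)
    (hs : ∑ u ∈ S, bcoef v lam hnd β k t u *
      exp (lfun v lam (Fin.castLE hnd k) u * (2 * s)) ≠ 0) :
    hessLogExpSum S β (xi (fun j p => (v (Fin.castLE hnd j) p : ℝ)) (Function.update t k s))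
        (fun p => (v (Fin.castLE hnd k) p : ℝ)) =
      4 * S.weightedVar
        (fun u => bcoef v lam hnd β k t u * exp (lfun v lam (Fin.castLE hnd k) u * (2 * s)))
        (fun u => lfun v lam (Fin.castLE hnd k) u) := by
  have hvals : (fun u => 2 * pairing u (fun p => (v (Fin.castLE hnd k) p : ℝ))) =
      fun u => 2 * (lfun v lam (Fin.castLE hnd k) u : ℝ) + -2 * lam (Fin.castLE hnd k) :=
    funext fun u => by rw [pairing_row]; ring
  simp only [hessLogExpSum, mul_exp_pairing_xi_update hnd v lam k t, hvals]
  rw [S.weightedVar_const_mul _ (exp_ne_zero _), S.weightedVar_affine _ _ _ hs]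
  norm_num

theorem tendsto_exp_mul_hessLogExpSum (β : (Fin n → ℤ) → ℝ) (j : ℤ)
    (hβ : ∀ u ∈ S, lfun v lam (Fin.castLE hnd k) u < j → β u = 0)
    (hD : ∑ u ∈ S with lfun v lam (Fin.castLE hnd k) u = j, bcoef v lam hnd β k t u ≠ 0) :
    Tendsto (fun s => exp (-2 * s) *
        hessLogExpSum S β (xi (fun j p => (v (Fin.castLE hnd j) p : ℝ)) (Function.update t k s))
          (fun p => (v (Fin.castLE hnd k) p : ℝ)))
      atBot (𝓝 (4 *
        ((∑ u ∈ S with lfun v lam (Fin.castLE hnd k) u = j + 1, bcoef v lam hnd β k t u) /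
          ∑ u ∈ S with lfun v lam (Fin.castLE hnd k) u = j, bcoef v lam hnd β k t u))) := by
  have hq : ∀ u ∈ S, lfun v lam (Fin.castLE hnd k) u < j → bcoef v lam hnd β k t u = 0 :=
    fun u hu h => by simp [bcoef, hβ u hu h]
  have h2 : Tendsto (fun s : ℝ => 2 * s) atBot atBot := tendsto_id.const_mul_atBot two_pos
  refine (((S.tendsto_exp_mul_weightedVar_atBot _ _ j hq hD).comp h2).const_mul 4).congr' ?_
  filter_upwards [h2.eventually (S.eventually_sum_mul_exp_ne_zero_atBot _ _ j hq hD)] with s hs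
  rw [hessLogExpSum_xi_update hnd v lam S k t β s hs, Function.comp_apply, neg_mul]
  ring

theorem sum_bcoef_pos {β : (Fin n → ℤ) → ℝ} (p : (Fin n → ℤ) → Prop) [DecidablePred p]
    (hβ : ∀ u ∈ S, 0 ≤ β u) (h : ∃ u ∈ S, p u ∧ 0 < β u) :
    0 < ∑ u ∈ S with p u, bcoef v lam hnd β k t u := by
  obtain ⟨u₀, hu₀, hpu₀, hβu₀⟩ := h
  exact Finset.sum_pos'
    (fun u hu => mul_nonneg (hβ u (Finset.mem_filter.1 hu).1) (exp_pos _).le)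
    ⟨u₀, Finset.mem_filter.2 ⟨hu₀, hpu₀⟩, mul_pos hβu₀ (exp_pos _)⟩

theorem sum_bcoef_mul_lfun (c : (Fin n → ℤ) → ℝ) (i : Fin d) (p : (Fin n → ℤ) → Prop)
    [DecidablePred p] (hl : ∀ u ∈ S, 0 ≤ lfun v lam i u) :
    ∑ u ∈ S with p u, bcoef v lam hnd (fun u => c u * lfun v lam i u) k t u =
      ∑ u ∈ S with p u ∧ 1 ≤ lfun v lam i u,
        (lfun v lam i u : ℝ) * bcoef v lam hnd c k t u := by
  rw [← Finset.filter_filter, Finset.sum_filter_of_ne (s := S.filter p)]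
  · exact Finset.sum_congr rfl fun u _ => by simp only [bcoef]; ring
  · intro u hu hne
    have := hl u (Finset.mem_filter.1 hu).1
    have : lfun v lam i u ≠ 0 := fun h => hne (by simp [bcoef, h])
    omega

theorem sum_filter_bcoef_mul_lfun_eq (c : (Fin n → ℤ) → ℝ) (i : Fin d) (j : ℤ) :
    ∑ u ∈ S with lfun v lam i u = j, bcoef v lam hnd (fun u => c u * lfun v lam i u) k t u =
      j * ∑ u ∈ S with lfun v lam i u = j, bcoef v lam hnd c k t u := by
  rw [Finset.mul_sum]
  refine Finset.sum_congr rfl fun u hu => ?_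
  simp only [bcoef, (Finset.mem_filter.1 hu).2]
  ring

end Curve

section Limit

variable {n d : ℕ} {hnd : n ≤ d} {v : Fin d → Fin n → ℤ} {lam : Fin d → ℤ}
  {S : Finset (Fin n → ℤ)} {c : (Fin n → ℤ) → ℝ}

theorem exists_mem_lfun_pos
    (hu0 : ∃ u₀ ∈ S, 0 < c u₀ ∧
      (∀ j : Fin n, lfun v lam (Fin.castLE hnd j) u₀ = 0) ∧
      (∀ i : Fin d, n ≤ (i : ℕ) → 1 ≤ lfun v lam i u₀))
    (huk : ∀ k : Fin n, ∃ u ∈ S, 0 < c u ∧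
      lfun v lam (Fin.castLE hnd k) u = 1 ∧
      (∀ j : Fin n, j ≠ k → lfun v lam (Fin.castLE hnd j) u = 0))
    (i : Fin d) :
    ∃ u ∈ S, 0 < c u ∧ 1 ≤ lfun v lam i u ∧
      ∀ k : Fin n, Fin.castLE hnd k ≠ i → lfun v lam (Fin.castLE hnd k) u = 0 := by
  by_cases hi : (i : ℕ) < n
  · have hcast : Fin.castLE hnd ⟨i, hi⟩ = i := rfl
    obtain ⟨u, hu, hcu, hui, hother⟩ := huk ⟨i, hi⟩
    refine ⟨u, hu, hcu, by rw [← hcast, hui], fun k hk => hother k fun h => hk ?_⟩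
    rw [h, hcast]
  · obtain ⟨u₀, hu₀, hcu₀, hzero, hfar⟩ := hu0
    exact ⟨u₀, hu₀, hcu₀, hfar i (not_lt.1 hi), fun k _ => hzero k⟩

theorem expSum_mul_lfun_pos {i : Fin d} (hl : ∀ u ∈ S, 0 ≤ lfun v lam i u)
    (hc : ∀ u ∈ S, 0 ≤ c u) (hw : ∃ u ∈ S, 0 < c u ∧ 1 ≤ lfun v lam i u) (x : Fin n → ℝ) :
    0 < expSum S (fun u => c u * lfun v lam i u) x := by
  obtain ⟨u, hu, hcu, hlu⟩ := hw
  exact expSum_pos S (fun u hu => mul_nonneg (hc u hu) (by exact_mod_cast hl u hu))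
    ⟨u, hu, mul_pos hcu (by exact_mod_cast hlu)⟩ x

theorem pd2_gzero (hP : ∀ i x, 0 < expSum S (fun u => c u * lfun v lam i u) x)
    (hQ : ∀ x, 0 < expSum S c x) (a : Fin d → ℤ) (x w : Fin n → ℝ) :
    pd2 (gzero v lam S c a) x w w = -(1/2) * ∑ i, (a i : ℝ) *
      (hessLogExpSum S (fun u => c u * lfun v lam i u) x w - hessLogExpSum S c x w) :=
  pd2_neg_half_sum_log_div S _ _ _ hP hQ x w

variable (k : Fin n) (t : Fin n → ℝ)

theorem tendsto_exp_mul_hessLogExpSum_coeff (hl : ∀ u ∈ S, ∀ i, 0 ≤ lfun v lam i u)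
    (hc : ∀ u ∈ S, 0 ≤ c u)
    (hu₀ : ∃ u ∈ S, 0 < c u ∧ lfun v lam (Fin.castLE hnd k) u = 0) :
    Tendsto (fun s => exp (-2 * s) *
        hessLogExpSum S c (xi (fun j p => (v (Fin.castLE hnd j) p : ℝ)) (Function.update t k s))
          (fun p => (v (Fin.castLE hnd k) p : ℝ)))
      atBot (𝓝 (4 *
        ((∑ u ∈ S with lfun v lam (Fin.castLE hnd k) u = 1, bcoef v lam hnd c k t u) /
          ∑ u ∈ S with lfun v lam (Fin.castLE hnd k) u = 0, bcoef v lam hnd c k t u))) := by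
  obtain ⟨u₀, hu₀, hcu₀, hlu₀⟩ := hu₀
  simpa using tendsto_exp_mul_hessLogExpSum hnd v lam S k t c 0
    (fun u hu h => absurd (hl u hu _) (not_le.2 h))
    (sum_bcoef_pos hnd v lam S k t _ hc ⟨u₀, hu₀, hlu₀, hcu₀⟩).ne'

theorem tendsto_exp_mul_hessLogExpSum_lfun_self (hl : ∀ u ∈ S, ∀ i, 0 ≤ lfun v lam i u)
    (hc : ∀ u ∈ S, 0 ≤ c u)
    (huk : ∃ u ∈ S, 0 < c u ∧ lfun v lam (Fin.castLE hnd k) u = 1) :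
    Tendsto (fun s => exp (-2 * s) *
        hessLogExpSum S (fun u => c u * lfun v lam (Fin.castLE hnd k) u)
          (xi (fun j p => (v (Fin.castLE hnd j) p : ℝ)) (Function.update t k s))
          (fun p => (v (Fin.castLE hnd k) p : ℝ)))
      atBot (𝓝 (4 *
        (2 * (∑ u ∈ S with lfun v lam (Fin.castLE hnd k) u = 2, bcoef v lam hnd c k t u) /
          ∑ u ∈ S with lfun v lam (Fin.castLE hnd k) u = 1, bcoef v lam hnd c k t u))) := by
  obtain ⟨u₁, hu₁, hcu₁, hlu₁⟩ := huk
  have hD := sum_bcoef_pos hnd v lam S k t (fun u => lfun v lam (Fin.castLE hnd k) u = 1) hc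
    ⟨u₁, hu₁, hlu₁, hcu₁⟩
  have h := tendsto_exp_mul_hessLogExpSum hnd v lam S k t
    (fun u => c u * lfun v lam (Fin.castLE hnd k) u) 1 (fun u hu h => by
      have : lfun v lam (Fin.castLE hnd k) u = 0 := by
        have := hl u hu (Fin.castLE hnd k); omega
      simp [this])
    (by rw [sum_filter_bcoef_mul_lfun_eq]; simpa using hD.ne')
  rw [sum_filter_bcoef_mul_lfun_eq, sum_filter_bcoef_mul_lfun_eq] at h
  simpa only [show (1 : ℤ) + 1 = 2 from rfl, Int.cast_one, Int.cast_ofNat, one_mul] using h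

theorem tendsto_exp_mul_hessLogExpSum_lfun_of_ne (hl : ∀ u ∈ S, ∀ i, 0 ≤ lfun v lam i u)
    (hc : ∀ u ∈ S, 0 ≤ c u) (i : Fin d)
    (hw : ∃ u ∈ S, 0 < c u ∧ 1 ≤ lfun v lam i u ∧ lfun v lam (Fin.castLE hnd k) u = 0) :
    Tendsto (fun s => exp (-2 * s) *
        hessLogExpSum S (fun u => c u * lfun v lam i u)
          (xi (fun j p => (v (Fin.castLE hnd j) p : ℝ)) (Function.update t k s))
          (fun p => (v (Fin.castLE hnd k) p : ℝ)))
      atBot (𝓝 (4 *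
        ((∑ u ∈ S with lfun v lam (Fin.castLE hnd k) u = 1 ∧ 1 ≤ lfun v lam i u,
            (lfun v lam i u : ℝ) * bcoef v lam hnd c k t u) /
          ∑ u ∈ S with lfun v lam (Fin.castLE hnd k) u = 0 ∧ 1 ≤ lfun v lam i u,
            (lfun v lam i u : ℝ) * bcoef v lam hnd c k t u))) := by
  obtain ⟨u, hu, hcu, hlu, hku⟩ := hw
  have hD := sum_bcoef_pos hnd v lam S k t (fun u => lfun v lam (Fin.castLE hnd k) u = 0)
    (β := fun u => c u * lfun v lam i u)
    (fun u hu => mul_nonneg (hc u hu) (by exact_mod_cast hl u hu i))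
    ⟨u, hu, hku, mul_pos hcu (by exact_mod_cast hlu)⟩
  have h := tendsto_exp_mul_hessLogExpSum hnd v lam S k t _ 0
    (fun u hu h => absurd (hl u hu _) (not_le.2 h)) hD.ne'
  rw [zero_add, sum_bcoef_mul_lfun hnd v lam S k t c i _ fun u hu => hl u hu i,
    sum_bcoef_mul_lfun hnd v lam S k t c i _ fun u hu => hl u hu i] at h
  exact h

end Limit

theorem gzero_second_derivative_limit_general (n d : ℕ) (hnd : n ≤ d)
    (v : Fin d → Fin n → ℤ) (lam : Fin d → ℤ)
    (S : Finset (Fin n → ℤ))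
    (hS : ∀ u : Fin n → ℤ, u ∈ S ↔ ∀ i : Fin d, 0 ≤ lfun v lam i u)
    (c : (Fin n → ℤ) → ℝ) (hc : ∀ u ∈ S, 0 ≤ c u)
    (hu0 : ∃ u₀ ∈ S, 0 < c u₀ ∧
      (∀ j : Fin n, lfun v lam (Fin.castLE hnd j) u₀ = 0) ∧
      (∀ i : Fin d, n ≤ (i : ℕ) → 1 ≤ lfun v lam i u₀))
    (huk : ∀ k : Fin n, ∃ u ∈ S, 0 < c u ∧
      lfun v lam (Fin.castLE hnd k) u = 1 ∧
      (∀ j : Fin n, j ≠ k → lfun v lam (Fin.castLE hnd j) u = 0))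
    (a : Fin d → ℤ)
    (k : Fin n) (t : Fin n → ℝ) :
    Tendsto (fun s : ℝ =>
        Real.exp (-2 * s) *
          pd2 (gzero v lam S c a)
            (xi (fun j p => (v (Fin.castLE hnd j) p : ℝ)) (Function.update t k s))
            (fun p => (v (Fin.castLE hnd k) p : ℝ))
            (fun p => (v (Fin.castLE hnd k) p : ℝ)))
      atBot (nhds
        (2 * (∑ i : Fin d, (a i : ℝ)) *
            ((∑ u ∈ S.filter (fun u => lfun v lam (Fin.castLE hnd k) u = 1),
                bcoef v lam hnd c k t u) /
              (∑ u ∈ S.filter (fun u => lfun v lam (Fin.castLE hnd k) u = 0),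
                bcoef v lam hnd c k t u)) -
          2 * (∑ i ∈ Finset.univ.erase (Fin.castLE hnd k), (a i : ℝ) *
            ((∑ u ∈ S.filter (fun u =>
                  lfun v lam (Fin.castLE hnd k) u = 1 ∧ 1 ≤ lfun v lam i u),
                (lfun v lam i u : ℝ) * bcoef v lam hnd c k t u) /
              (∑ u ∈ S.filter (fun u =>
                  lfun v lam (Fin.castLE hnd k) u = 0 ∧ 1 ≤ lfun v lam i u),
                (lfun v lam i u : ℝ) * bcoef v lam hnd c k t u))) -
          4 * (a (Fin.castLE hnd k) : ℝ) *
            ((∑ u ∈ S.filter (fun u => lfun v lam (Fin.castLE hnd k) u = 2),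
                bcoef v lam hnd c k t u) /
              (∑ u ∈ S.filter (fun u => lfun v lam (Fin.castLE hnd k) u = 1),
                bcoef v lam hnd c k t u)))) := by
  have hl : ∀ u ∈ S, ∀ i, 0 ≤ lfun v lam i u := fun u hu => (hS u).1 hu
  have hw := exists_mem_lfun_pos hu0 huk
  obtain ⟨u₀, hu₀, hcu₀, hu₀l, -⟩ := hu0
  obtain ⟨uk, hukS, hcuk, hluk, -⟩ := huk k
  have hP := fun i => expSum_mul_lfun_pos (fun u hu => hl u hu i) hc <|
    (hw i).imp fun _ ⟨hu, hcu, hlu, _⟩ => ⟨hu, hcu, hlu⟩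
  have hQ := expSum_pos S hc ⟨u₀, hu₀, hcu₀⟩
  have hconst := tendsto_exp_mul_hessLogExpSum_coeff k t hl hc ⟨u₀, hu₀, hcu₀, hu₀l k⟩
  have hself := tendsto_exp_mul_hessLogExpSum_lfun_self k t hl hc ⟨uk, hukS, hcuk, hluk⟩
  have hne := fun i (hi : i ∈ Finset.univ.erase (Fin.castLE hnd k)) =>
    tendsto_exp_mul_hessLogExpSum_lfun_of_ne k t hl hc i <|
      (hw i).imp fun _ ⟨hu, hcu, hlu, h⟩ => ⟨hu, hcu, hlu, h k (Finset.ne_of_mem_erase hi).symm⟩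
  have hlim := (((hself.sub hconst).const_mul (a (Fin.castLE hnd k) : ℝ)).add
    (tendsto_finsetSum _ fun i hi => ((hne i hi).sub hconst).const_mul (a i : ℝ))).const_mul
      (-(1/2) : ℝ)
  have hsplit : ∀ f : Fin d → ℝ, ∑ i, f i =
      f (Fin.castLE hnd k) + ∑ i ∈ Finset.univ.erase (Fin.castLE hnd k), f i :=
    fun f => (Finset.add_sum_erase _ _ (Finset.mem_univ _)).symm
  convert hlim using 1
  · funext s
    rw [pd2_gzero hP hQ, hsplit]
    simp only [mul_add, Finset.mul_sum]
    ring_nf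
  · congr 1
    simp only [hsplit, mul_sub, Finset.sum_sub_distrib, ← Finset.sum_mul,
      mul_left_comm _ (4 : ℝ), ← Finset.mul_sum]
    ring

/-- as `tₖ → −∞` (the other coordinates of `t` fixed), the function
`e^{−2tₖ}·vₖᵀ(Hess g₀)(ξ(t))vₖ` converges to
`2(Σᵢ aᵢ)·(Σ_{lₖ(u)=1} b_u)/(Σ_{lₖ(u)=0} b_u)
  − 2Σ_{i≠k} aᵢ·(Σ_{lₖ(u)=1, lᵢ(u)≥1} lᵢ(u)b_u)/(Σ_{lₖ(u)=0, lᵢ(u)≥1} lᵢ(u)b_u)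
  − 4aₖ·(Σ_{lₖ(u)=2} b_u)/(Σ_{lₖ(u)=1} b_u)`. -/
theorem gzero_second_derivative_limit (n d : ℕ) (hnd : n ≤ d)
    (v : Fin d → Fin n → ℤ) (lam : Fin d → ℤ)
    (S : Finset (Fin n → ℤ))
    (hS : ∀ u : Fin n → ℤ, u ∈ S ↔ ∀ i : Fin d, 0 ≤ lfun v lam i u)
    (hbdd : Bornology.IsBounded {x : Fin n → ℝ | ∀ i : Fin d, 0 ≤ lfunR v lam i x})
    (c : (Fin n → ℤ) → ℝ) (hc : ∀ u ∈ S, 0 ≤ c u)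
    (hbasis : IsUnit (Matrix.of fun j k : Fin n => v (Fin.castLE hnd j) k).det)
    (hu0 : ∃ u₀ ∈ S, 0 < c u₀ ∧
      (∀ j : Fin n, lfun v lam (Fin.castLE hnd j) u₀ = 0) ∧
      (∀ i : Fin d, n ≤ (i : ℕ) → 1 ≤ lfun v lam i u₀))
    (huk : ∀ k : Fin n, ∃ u ∈ S, 0 < c u ∧
      lfun v lam (Fin.castLE hnd k) u = 1 ∧
      (∀ j : Fin n, j ≠ k → lfun v lam (Fin.castLE hnd j) u = 0))
    (a : Fin d → ℤ)
    (k : Fin n) (t : Fin n → ℝ) :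
    Tendsto (fun s : ℝ =>
        Real.exp (-2 * s) *
          pd2 (gzero v lam S c a)
            (xi (fun j p => (v (Fin.castLE hnd j) p : ℝ)) (Function.update t k s))
            (fun p => (v (Fin.castLE hnd k) p : ℝ))
            (fun p => (v (Fin.castLE hnd k) p : ℝ)))
      atBot (nhds
        (2 * (∑ i : Fin d, (a i : ℝ)) *
            ((∑ u ∈ S.filter (fun u => lfun v lam (Fin.castLE hnd k) u = 1),
                bcoef v lam hnd c k t u) /
              (∑ u ∈ S.filter (fun u => lfun v lam (Fin.castLE hnd k) u = 0),
                bcoef v lam hnd c k t u)) -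
          2 * (∑ i ∈ Finset.univ.erase (Fin.castLE hnd k), (a i : ℝ) *
            ((∑ u ∈ S.filter (fun u =>
                  lfun v lam (Fin.castLE hnd k) u = 1 ∧ 1 ≤ lfun v lam i u),
                (lfun v lam i u : ℝ) * bcoef v lam hnd c k t u) /
              (∑ u ∈ S.filter (fun u =>
                  lfun v lam (Fin.castLE hnd k) u = 0 ∧ 1 ≤ lfun v lam i u),
                (lfun v lam i u : ℝ) * bcoef v lam hnd c k t u))) -
          4 * (a (Fin.castLE hnd k) : ℝ) *
            ((∑ u ∈ S.filter (fun u => lfun v lam (Fin.castLE hnd k) u = 2),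
                bcoef v lam hnd c k t u) /
              (∑ u ∈ S.filter (fun u => lfun v lam (Fin.castLE hnd k) u = 1),
                bcoef v lam hnd c k t u)))) :=
  gzero_second_derivative_limit_general n d hnd v lam S hS c hc hu0 huk a k t
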